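/- Let 0<s<1 and let N be an integer with N>2s. Define λ(α) := 2^{2s} Γ((N+2s+2α)/4) Γ((N+2s-2α)/4) / ( Γ((N-2s+2α)/4) Γ((N-2s-2α)/4) ) for 0 ≤ α < (N-2s)/2. Then λ is strictly decreasing on the interval [0, (N-2s)/2). -/
import Mathlib


open MeasureTheory Real Filter

noncomputable section

open scoped Topology

/-- The spectral function
`λ(α) = 2^{2s} Γ((N+2s+2α)/4) Γ((N+2s-2α)/4) / (Γ((N-2s+2α)/4) Γ((N-2s-2α)/4))`. -/
def lambdaAlpha (N : ℕ) (s α : ℝ) : ℝ :=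
  2 ^ (2 * s) * Real.Gamma (((N : ℝ) + 2 * s + 2 * α) / 4) *
      Real.Gamma (((N : ℝ) + 2 * s - 2 * α) / 4) /
    (Real.Gamma (((N : ℝ) - 2 * s + 2 * α) / 4) *
      Real.Gamma (((N : ℝ) - 2 * s - 2 * α) / 4))

/-- Euler-limit formula for a ratio of Gamma values with equal argument sums. -/
private lemma gammaRatio_tendsto (p q p' q' : ℝ) (hp : 0 < p) (hq : 0 < q)
    (hp' : 0 < p') (hq' : 0 < q') (hsum : p + q = p' + q') :
    Tendsto (fun n : ℕ => ∏ j ∈ Finset.range (n + 1),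
        ((p' + j) * (q' + j)) / ((p + j) * (q + j))) atTop
      (𝓝 (Real.Gamma p * Real.Gamma q / (Real.Gamma p' * Real.Gamma q'))) := by
  have hne : Real.Gamma p' * Real.Gamma q' ≠ 0 :=
    ne_of_gt (mul_pos (Real.Gamma_pos_of_pos hp') (Real.Gamma_pos_of_pos hq'))
  have h := (((Real.GammaSeq_tendsto_Gamma p).mul (Real.GammaSeq_tendsto_Gamma q)).div
    ((Real.GammaSeq_tendsto_Gamma p').mul (Real.GammaSeq_tendsto_Gamma q')) hne)
  refine h.congr' ?_
  filter_upwards [eventually_ge_atTop 1] with n hn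
  have hn0 : (0 : ℝ) < (n : ℝ) := by exact_mod_cast hn
  have hprod : ∀ r : ℝ, 0 < r → (0 : ℝ) < ∏ j ∈ Finset.range (n + 1), (r + j) := by
    intro r hr
    exact Finset.prod_pos fun j _ => by positivity
  have hPp := (hprod p hp).ne'
  have hPq := (hprod q hq).ne'
  have hPp' := (hprod p' hp').ne'
  have hPq' := (hprod q' hq').ne'
  have hfact : ((Nat.factorial n : ℝ)) ≠ 0 := by positivity
  have hpow : (n : ℝ) ^ p * (n : ℝ) ^ q = (n : ℝ) ^ p' * (n : ℝ) ^ q' := by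
    rw [← Real.rpow_add hn0, hsum, Real.rpow_add hn0]
  simp only [Real.GammaSeq, Pi.div_apply, Pi.mul_apply]
  rw [Finset.prod_div_distrib, Finset.prod_mul_distrib, Finset.prod_mul_distrib]
  rw [div_mul_div_comm, div_mul_div_comm, div_div_div_comm]
  have hab : (↑n : ℝ) ^ p * ↑n.factorial * (↑n ^ q * ↑n.factorial) /
      (↑n ^ p' * ↑n.factorial * (↑n ^ q' * ↑n.factorial)) = 1 := by
    rw [div_eq_one_iff_eq (by positivity)]
    linear_combination ((Nat.factorial n : ℝ) * (Nat.factorial n : ℝ)) * hpow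
  rw [hab, one_div_div]

/-- Comparison of two products of two Gamma values each, with matching argument sums,
when the defining products are pointwise comparable. -/
private lemma gammaProd_lt (P1 Q1 P1' Q1' P2 Q2 P2' Q2' : ℝ)
    (hP1 : 0 < P1) (hQ1 : 0 < Q1) (hP1' : 0 < P1') (hQ1' : 0 < Q1')
    (hP2 : 0 < P2) (hQ2 : 0 < Q2) (hP2' : 0 < P2') (hQ2' : 0 < Q2')
    (hsum1 : P1 + Q1 = P1' + Q1') (hsum2 : P2 + Q2 = P2' + Q2')
    (hterm : ∀ j : ℝ, 0 ≤ j →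
      (P1 + j) * (Q1 + j) * ((P2 + j) * (Q2 + j)) <
        (P1' + j) * (Q1' + j) * ((P2' + j) * (Q2' + j))) :
    Real.Gamma P1' * Real.Gamma Q1' * (Real.Gamma P2' * Real.Gamma Q2') <
      Real.Gamma P1 * Real.Gamma Q1 * (Real.Gamma P2 * Real.Gamma Q2) := by
  have hfrac : ∀ j : ℝ, 0 ≤ j →
      1 < (P1' + j) * (Q1' + j) / ((P1 + j) * (Q1 + j)) *
        ((P2' + j) * (Q2' + j) / ((P2 + j) * (Q2 + j))) := by
    intro j hj
    have d1 : (0 : ℝ) < (P1 + j) * (Q1 + j) :=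
      mul_pos (by linarith) (by linarith)
    have d2 : (0 : ℝ) < (P2 + j) * (Q2 + j) :=
      mul_pos (by linarith) (by linarith)
    rw [div_mul_div_comm, lt_div_iff₀ (mul_pos d1 d2), one_mul]
    exact hterm j hj
  have h1 := gammaRatio_tendsto P1 Q1 P1' Q1' hP1 hQ1 hP1' hQ1' hsum1
  have h2 := gammaRatio_tendsto P2 Q2 P2' Q2' hP2 hQ2 hP2' hQ2' hsum2
  have hge : P1' * Q1' / (P1 * Q1) * (P2' * Q2' / (P2 * Q2)) ≤
      Real.Gamma P1 * Real.Gamma Q1 / (Real.Gamma P1' * Real.Gamma Q1') *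
        (Real.Gamma P2 * Real.Gamma Q2 / (Real.Gamma P2' * Real.Gamma Q2')) := by
    refine ge_of_tendsto (h1.mul h2) (Eventually.of_forall fun n => ?_)
    rw [← Finset.prod_mul_distrib, Finset.prod_range_succ']
    simp only [Nat.cast_zero, add_zero]
    refine le_mul_of_one_le_left ?_ ?_
    · have l1 : (0 : ℝ) < P1' * Q1' / (P1 * Q1) :=
        div_pos (mul_pos hP1' hQ1') (mul_pos hP1 hQ1)
      have l2 : (0 : ℝ) < P2' * Q2' / (P2 * Q2) :=
        div_pos (mul_pos hP2' hQ2') (mul_pos hP2 hQ2)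
      exact (mul_pos l1 l2).le
    · have : (1:ℝ) = ∏ _j ∈ Finset.range n, (1:ℝ) := by simp
      rw [this]
      refine Finset.prod_le_prod (fun j _ => zero_le_one) ?_
      intro j _
      have h := (hfrac ((j : ℝ) + 1) (by positivity)).le
      push_cast
      exact h
  have h0 : (1 : ℝ) < P1' * Q1' / (P1 * Q1) * (P2' * Q2' / (P2 * Q2)) := by
    have := hfrac 0 le_rfl
    simpa using this
  have hone := lt_of_lt_of_le h0 hge
  have dG1 : (0 : ℝ) < Real.Gamma P1' * Real.Gamma Q1' :=
    mul_pos (Real.Gamma_pos_of_pos hP1') (Real.Gamma_pos_of_pos hQ1')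
  have dG2 : (0 : ℝ) < Real.Gamma P2' * Real.Gamma Q2' :=
    mul_pos (Real.Gamma_pos_of_pos hP2') (Real.Gamma_pos_of_pos hQ2')
  rw [div_mul_div_comm, lt_div_iff₀ (mul_pos dG1 dG2), one_mul] at hone
  linarith

/-- For `0 < s < 1` and `N > 2s`, the function `α ↦ λ(α)` is strictly decreasing on
`[0, (N-2s)/2)`. -/
theorem lambdaAlpha_strictAnti (N : ℕ) (s : ℝ) (hs0 : 0 < s) (hs1 : s < 1)
    (hN : 2 * s < (N : ℝ)) :
    StrictAntiOn (fun α => lambdaAlpha N s α) (Set.Ico (0 : ℝ) (((N : ℝ) - 2 * s) / 2)) := by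
  intro α hα β hβ hαβ
  obtain ⟨hα0, hα1⟩ := hα
  obtain ⟨hβ0, hβ1⟩ := hβ
  have key := gammaProd_lt (((N : ℝ) + 2 * s + 2 * α) / 4) (((N : ℝ) - 2 * s + 2 * β) / 4)
    (((N : ℝ) - 2 * s + 2 * α) / 4) (((N : ℝ) + 2 * s + 2 * β) / 4)
    (((N : ℝ) + 2 * s - 2 * α) / 4) (((N : ℝ) - 2 * s - 2 * β) / 4)
    (((N : ℝ) - 2 * s - 2 * α) / 4) (((N : ℝ) + 2 * s - 2 * β) / 4)
    (by linarith) (by linarith) (by linarith) (by linarith)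
    (by linarith) (by linarith) (by linarith) (by linarith)
    (by ring) (by ring) ?_
  · simp only
    unfold lambdaAlpha
    have gP1 := Real.Gamma_pos_of_pos (show (0:ℝ) < ((N : ℝ) + 2 * s + 2 * α) / 4 by linarith)
    have gQ1 := Real.Gamma_pos_of_pos (show (0:ℝ) < ((N : ℝ) - 2 * s + 2 * β) / 4 by linarith)
    have gP1' := Real.Gamma_pos_of_pos (show (0:ℝ) < ((N : ℝ) - 2 * s + 2 * α) / 4 by linarith)
    have gQ1' := Real.Gamma_pos_of_pos (show (0:ℝ) < ((N : ℝ) + 2 * s + 2 * β) / 4 by linarith)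
    have gP2 := Real.Gamma_pos_of_pos (show (0:ℝ) < ((N : ℝ) + 2 * s - 2 * α) / 4 by linarith)
    have gQ2 := Real.Gamma_pos_of_pos (show (0:ℝ) < ((N : ℝ) - 2 * s - 2 * β) / 4 by linarith)
    have gP2' := Real.Gamma_pos_of_pos (show (0:ℝ) < ((N : ℝ) - 2 * s - 2 * α) / 4 by linarith)
    have gQ2' := Real.Gamma_pos_of_pos (show (0:ℝ) < ((N : ℝ) + 2 * s - 2 * β) / 4 by linarith)
    rw [div_lt_div_iff₀ (mul_pos gQ1 gQ2) (mul_pos gP1' gP2')]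
    have h2s : (0 : ℝ) < 2 ^ (2 * s) := by positivity
    nlinarith [mul_lt_mul_of_pos_left key h2s]
  · intro j hj
    have hident : (((N : ℝ) - 2 * s + 2 * α) / 4 + j) * (((N : ℝ) + 2 * s + 2 * β) / 4 + j) *
        ((((N : ℝ) - 2 * s - 2 * α) / 4 + j) * (((N : ℝ) + 2 * s - 2 * β) / 4 + j)) -
        (((N : ℝ) + 2 * s + 2 * α) / 4 + j) * (((N : ℝ) - 2 * s + 2 * β) / 4 + j) *
        ((((N : ℝ) + 2 * s - 2 * α) / 4 + j) * (((N : ℝ) - 2 * s - 2 * β) / 4 + j)) =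
        s * ((N : ℝ) / 2 + 2 * j) * ((β + α) * (β - α)) / 4 := by
      ring
    have hpos : (0 : ℝ) < s * ((N : ℝ) / 2 + 2 * j) * ((β + α) * (β - α)) / 4 := by
      have : (0 : ℝ) < (N : ℝ) / 2 + 2 * j := by linarith
      have hβα : (0 : ℝ) < β - α := by linarith
      have hβα' : (0 : ℝ) < β + α := by linarith
      positivity
    linarith

end
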